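/- Let k be a commutative ring and L a k-module, and let B := k ⊕ L be the trivial square-zero extension with multiplication μ((a,x)⊗(b,y)) = (ab, ay + bx), unit η(1) = (1,0), comultiplication Δ(a,x) = (a,x)⊗(1,0) + (1,0)⊗(0,x), counit ε(a,x) = a, and let ħ : B⊗B → B⊗B be the k-linear map determined by ħ((a,x)⊗(b,y)) = (b,y)⊗(a,0) + (b,0)⊗(0,x) − (0,x)⊗(0,y). Then (B,Δ,ε,μ,η,ħ) is a bi-monoid in the category of k-modules; that is, the four compatibility conditions hold: (a) Δ∘η = η⊗η, (b) (μ⊗μ)∘(B⊗ħ⊗B)∘(Δ⊗Δ) = Δ∘μ, (c) ε∘η = id_k, (d) ε∘μ = ε⊗ε. -/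

import Mathlib

open scoped TensorProduct

/-- The middle interchange `(B ⊗ h ⊗ B) : B⊗B⊗B⊗B → B⊗B⊗B⊗B`, applying
`h` to the two middle tensor factors, with the associativity identifications explicit. -/
noncomputable def midMap (k : Type*) [CommRing k] (B : Type*) [AddCommGroup B] [Module k B]
    (h : B ⊗[k] B →ₗ[k] B ⊗[k] B) :
    (B ⊗[k] B) ⊗[k] (B ⊗[k] B) →ₗ[k] (B ⊗[k] B) ⊗[k] (B ⊗[k] B) :=
  (TensorProduct.assoc k (B ⊗[k] B) B B).toLinearMap
    ∘ₗ TensorProduct.map (TensorProduct.assoc k B B B).symm.toLinearMap LinearMap.id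
    ∘ₗ TensorProduct.map (TensorProduct.map LinearMap.id h) LinearMap.id
    ∘ₗ TensorProduct.map (TensorProduct.assoc k B B B).toLinearMap LinearMap.id
    ∘ₗ (TensorProduct.assoc k (B ⊗[k] B) B B).symm.toLinearMap

lemma midMap_key (k : Type*) [CommRing k] (B : Type*) [AddCommGroup B] [Module k B]
    (h : B ⊗[k] B →ₗ[k] B ⊗[k] B) (u v w z p1 q1 p2 q2 p3 q3 : B)
    (H : h (v ⊗ₜ[k] w) = p1 ⊗ₜ[k] q1 + p2 ⊗ₜ[k] q2 - p3 ⊗ₜ[k] q3) :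
    midMap k B h ((u ⊗ₜ[k] v) ⊗ₜ[k] (w ⊗ₜ[k] z)) =
      (u ⊗ₜ[k] p1) ⊗ₜ[k] (q1 ⊗ₜ[k] z) + (u ⊗ₜ[k] p2) ⊗ₜ[k] (q2 ⊗ₜ[k] z)
        - (u ⊗ₜ[k] p3) ⊗ₜ[k] (q3 ⊗ₜ[k] z) := by
  simp only [midMap, LinearMap.comp_apply, LinearEquiv.coe_coe,
    TensorProduct.assoc_symm_tmul, TensorProduct.map_tmul, TensorProduct.assoc_tmul,
    LinearMap.id_coe, id_eq, H, TensorProduct.tmul_add, TensorProduct.tmul_sub,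
    TensorProduct.add_tmul, TensorProduct.sub_tmul, map_add, map_sub]

/-- On the trivial square-zero extension `B = k ⊕ L` with its algebra structure
`(a,x)(b,y) = (ab, ay + bx)`, unit `(1,0)`, coalgebra structure
`Δ(a,x) = (a,x)⊗(1,0) + (1,0)⊗(0,x)`, `ε(a,x) = a`, and the double distributive law
`h((a,x)⊗(b,y)) = (b,y)⊗(a,0) + (b,0)⊗(0,x) − (0,x)⊗(0,y)`, the tuple
`(B, Δ, ε, μ, η, h)` is a bi-monoid in the category of `k`-modules: the four
compatibility conditions hold. -/
theorem stmt_19 (k : Type*) [CommRing k] (L : Type*) [AddCommGroup L] [Module k L]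
    (μ : (k × L) ⊗[k] (k × L) →ₗ[k] k × L) (η : k →ₗ[k] k × L)
    (Δ : k × L →ₗ[k] (k × L) ⊗[k] (k × L)) (ε : k × L →ₗ[k] k)
    (h : (k × L) ⊗[k] (k × L) →ₗ[k] (k × L) ⊗[k] (k × L))
    (hμ : ∀ (a b : k) (x y : L), μ ((a, x) ⊗ₜ[k] (b, y)) = (a * b, a • y + b • x))
    (hη : ∀ a : k, η a = (a, 0))
    (hΔ : ∀ (a : k) (x : L),
      Δ (a, x) = (a, x) ⊗ₜ[k] ((1 : k), (0 : L)) + ((1 : k), (0 : L)) ⊗ₜ[k] ((0 : k), x))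
    (hε : ∀ (a : k) (x : L), ε (a, x) = a)
    (hh : ∀ (a b : k) (x y : L),
      h ((a, x) ⊗ₜ[k] (b, y)) =
        (b, y) ⊗ₜ[k] ((a : k), (0 : L)) + ((b : k), (0 : L)) ⊗ₜ[k] ((0 : k), x)
          - ((0 : k), x) ⊗ₜ[k] ((0 : k), y)) :
    -- (a)  Δ ∘ η = η ⊗ η
    (Δ ∘ₗ η = TensorProduct.map η η ∘ₗ (TensorProduct.lid k k).symm.toLinearMap) ∧
    -- (b)  (μ ⊗ μ) ∘ (B ⊗ h ⊗ B) ∘ (Δ ⊗ Δ) = Δ ∘ μ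
    (TensorProduct.map μ μ ∘ₗ midMap k (k × L) h ∘ₗ TensorProduct.map Δ Δ = Δ ∘ₗ μ) ∧
    -- (c)  ε ∘ η = id
    (ε ∘ₗ η = LinearMap.id) ∧
    -- (d)  ε ∘ μ = ε ⊗ ε
    (ε ∘ₗ μ = (TensorProduct.lid k k).toLinearMap ∘ₗ TensorProduct.map ε ε) := by
  refine ⟨?_, ?_, ?_, ?_⟩
  · ext a
    simp [hη, hΔ, TensorProduct.tmul_add, Prod.mk_zero_zero]
  · apply TensorProduct.ext'
    rintro ⟨a, x⟩ ⟨b, y⟩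
    simp only [LinearMap.comp_apply, TensorProduct.map_tmul, hΔ,
      TensorProduct.tmul_add, TensorProduct.add_tmul, map_add]
    rw [midMap_key k (k × L) h _ _ _ _ _ _ _ _ _ _ (hh 1 b 0 y),
        midMap_key k (k × L) h _ _ _ _ _ _ _ _ _ _ (hh 0 b x y),
        midMap_key k (k × L) h _ _ _ _ _ _ _ _ _ _ (hh 1 1 0 0),
        midMap_key k (k × L) h _ _ _ _ _ _ _ _ _ _ (hh 0 1 x 0)]
    simp only [map_add, map_sub, TensorProduct.map_tmul, hμ]
    have e1 : ((a : k), x) ⊗ₜ[k] ((0 : k), y) =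
        ((1 : k), (0 : L)) ⊗ₜ[k] ((0 : k), a • y) + ((0 : k), x) ⊗ₜ[k] ((0 : k), y) := by
      have : ((a : k), x) = a • ((1 : k), (0 : L)) + ((0 : k), x) := by
        simp [Prod.ext_iff]
      rw [this, TensorProduct.add_tmul, TensorProduct.smul_tmul]
      simp [Prod.smul_mk]
    have e2 : ((b : k), (0 : L)) ⊗ₜ[k] ((0 : k), x) =
        ((1 : k), (0 : L)) ⊗ₜ[k] ((0 : k), b • x) := by
      have : ((b : k), (0 : L)) = b • ((1 : k), (0 : L)) := by simp [Prod.smul_mk]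
      rw [this, TensorProduct.smul_tmul]
      simp [Prod.smul_mk]
    simp only [hΔ, hμ, smul_zero, zero_smul, one_smul, zero_add, add_zero, mul_one, one_mul,
      mul_zero, zero_mul, TensorProduct.tmul_zero, TensorProduct.zero_tmul, e1, e2,
      TensorProduct.tmul_add]
    simp only [show ((0:k),(0:L)) = 0 from rfl, TensorProduct.tmul_zero,
      TensorProduct.zero_tmul, smul_zero, add_zero, zero_add]
    have e3 : ((1:k),(0:L)) ⊗ₜ[k] ((0:k), b • x) + ((1:k),(0:L)) ⊗ₜ[k] ((0:k), a • y)
        = ((1:k),(0:L)) ⊗ₜ[k] ((0:k), a • y + b • x) := by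
      rw [← TensorProduct.tmul_add, Prod.mk_add_mk, zero_add, add_comm (b • x)]
    rw [← e3]
    abel
  · ext a
    simp [hη, hε]
  · apply TensorProduct.ext'
    rintro ⟨a, x⟩ ⟨b, y⟩
    simp [hμ, hε]
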